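/- In a parity game, for every position q, exactly one of the two players has a winning strategy from q, and moreover each player Π has a single positional strategy f_Π that is winning from every position in the winning region of Π. -/

import Mathlib

/-- A game board: each position has an owner (a player, `false` or `true`)
and a set of admissible moves. -/
structure Game (B : Type*) where
  owner : B → Bool
  E : B → B → Prop

namespace Game

variable {B : Type*} (G : Game B)

/-- An infinite play respecting the move relation. -/
def InfPlay (p : ℕ → B) : Prop := ∀ n, G.E (p n) (p (n + 1))

/-- A finite full play: a nonempty path whose last position is stuck. -/
def FinPlay (l : List B) : Prop :=
  l ≠ [] ∧ l.Chain' G.E ∧ ∀ b, l.getLast? = some b → ∀ c, ¬ G.E b c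

/-- An infinite play guided by a positional strategy `f` of player `pl`. -/
def PosGuidedInf (pl : Bool) (f : B → B) (p : ℕ → B) : Prop :=
  ∀ n, G.owner (p n) = pl → p (n + 1) = f (p n)

/-- A finite path guided by a positional strategy `f` of player `pl`. -/
def PosGuidedFin (pl : Bool) (f : B → B) (l : List B) : Prop :=
  ∀ i b c, l[i]? = some b → l[i + 1]? = some c → G.owner b = pl → c = f b

/-- A positional strategy is legal if it always picks admissible moves. -/
def PosLegal (pl : Bool) (f : B → B) : Prop :=
  ∀ b, G.owner b = pl → (∃ c, G.E b c) → G.E b (f b)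

/-- An infinite play guided by a general (history-dependent) strategy. -/
def GuidedInf (pl : Bool) (σ : List B → B) (p : ℕ → B) : Prop :=
  ∀ n, G.owner (p n) = pl → p (n + 1) = σ ((List.range (n + 1)).map p)

/-- A finite path guided by a general strategy. -/
def GuidedFin (pl : Bool) (σ : List B → B) (l : List B) : Prop :=
  ∀ i b c, l[i]? = some b → l[i + 1]? = some c → G.owner b = pl →
    c = σ (l.take (i + 1))

/-- Legality of a general strategy. -/
def Legal (pl : Bool) (σ : List B → B) : Prop :=
  ∀ l b, l.getLast? = some b → G.owner b = pl → (∃ c, G.E b c) → G.E b (σ l)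

/-- Player `pl` wins an infinite play of a parity game with priority map `Ω`:
the maximal priority occurring infinitely often has parity `pl`. -/
def ParityWins (Ω : B → ℕ) (pl : Bool) (p : ℕ → B) : Prop :=
  ∃ k, (k % 2 = cond pl 1 0) ∧ (∀ N, ∃ n ≥ N, Ω (p n) = k) ∧
    ∀ j, (∀ N, ∃ n ≥ N, Ω (p n) = j) → j ≤ k

/-- Player `pl`'s general strategy `σ` is winning from `q` in the parity game. -/
def WinsGen (Ω : B → ℕ) (pl : Bool) (σ : List B → B) (q : B) : Prop :=
  G.Legal pl σ ∧
    (∀ l, l.head? = some q → G.FinPlay l → G.GuidedFin pl σ l →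
      ∀ b, l.getLast? = some b → G.owner b ≠ pl) ∧
    (∀ p, p 0 = q → G.InfPlay p → G.GuidedInf pl σ p → Game.ParityWins Ω pl p)

/-- Player `pl`'s positional strategy `f` is winning from `q`. -/
def WinsPos (Ω : B → ℕ) (pl : Bool) (f : B → B) (q : B) : Prop :=
  G.PosLegal pl f ∧
    (∀ l, l.head? = some q → G.FinPlay l → G.PosGuidedFin pl f l →
      ∀ b, l.getLast? = some b → G.owner b ≠ pl) ∧
    (∀ p, p 0 = q → G.InfPlay p → G.PosGuidedInf pl f p → Game.ParityWins Ω pl p)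

end Game

/-!
A `pl`-paradise is a set `U` with a positional strategy `g` of `pl` such that the opponent cannot
leave `U`, `pl` is never stuck in `U`, and `g` wins every infinite play from `U`. Paradises of a
player are closed under unions (play in the paradise of least index for a well-order; along a play
this index never increases, so eventually a single strategy is followed), so each player has a
largest one.

Zielonka's induction on the priorities shows that every position lies in a paradise of one of the
players. Let `d` be the top priority, `pl` its parity, and `Z` the complement of the opponent's
largest paradise. Removing from `Z` the `pl`-attractor `A` of its positions of priority `d` leaves
a subgame with smaller priorities in which, by maximality, the opponent has no paradise; so `pl`
wins it, and wins `Z` by also attracting to priority `d` inside `A`: a play then either sees `d`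
infinitely often or ends up in the subgame.

The play in which both players follow their strategies is won by only one of them, so the two
largest paradises are the two winning regions.
-/

namespace Game

variable {B : Type*} {G : Game B} {Ω : B → ℕ} {pl : Bool} {U : Set B} {g : B → B}

theorem parityWins_of_shift {p : ℕ → B} (k : ℕ)
    (h : ParityWins Ω pl (fun n => p (n + k))) : ParityWins Ω pl p := by
  obtain ⟨d, hd, hinf, hmax⟩ := h
  refine ⟨d, hd, fun N => ?_, fun j hj => hmax j fun N => ?_⟩
  · obtain ⟨n, hn, he⟩ := hinf N
    exact ⟨n + k, by omega, he⟩
  · obtain ⟨n, hn, he⟩ := hj (N + k)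
    exact ⟨n - k, by omega, by simpa only [Nat.sub_add_cancel (show k ≤ n by omega)]⟩

theorem ParityWins.not_parityWins_not {p : ℕ → B} (h : ParityWins Ω pl p) :
    ¬ ParityWins Ω (!pl) p := by
  rintro ⟨d', hd', hinf', hmax'⟩
  obtain ⟨d, hd, hinf, hmax⟩ := h
  have : d = d' := le_antisymm (hmax' d hinf) (hmax d' hinf')
  cases pl <;> simp_all

theorem parityWins_of_frequently_eq {p : ℕ → B} {d : ℕ} (hd : d % 2 = cond pl 1 0)
    (hle : ∀ n, Ω (p n) ≤ d) (hinf : ∀ N, ∃ n ≥ N, Ω (p n) = d) : ParityWins Ω pl p :=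
  ⟨d, hd, hinf, fun j hj => by obtain ⟨n, -, rfl⟩ := hj 0; exact hle n⟩

def playPrefix (p : ℕ → B) (n : ℕ) : List B := (List.range (n + 1)).map p

theorem getElem?_playPrefix {p : ℕ → B} {n i : ℕ} :
    (playPrefix p n)[i]? = if i ≤ n then some (p i) else none := by
  split_ifs with h
  · simp [playPrefix, List.getElem?_range (Nat.lt_succ_of_le h)]
  · simp [playPrefix]; omega

theorem head?_playPrefix (p : ℕ → B) (n : ℕ) : (playPrefix p n).head? = some (p 0) := by
  rw [List.head?_eq_getElem?, getElem?_playPrefix, if_pos (Nat.zero_le n)]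

theorem getLast?_playPrefix (p : ℕ → B) (n : ℕ) : (playPrefix p n).getLast? = some (p n) := by
  rw [List.getLast?_eq_getElem?, getElem?_playPrefix]; simp [playPrefix]

theorem getLastD_playPrefix (p : ℕ → B) (n : ℕ) (q : B) :
    (playPrefix p n).getLastD q = p n := by
  simp [List.getLastD_eq_getLast?, getLast?_playPrefix]

theorem take_playPrefix {p : ℕ → B} {n i : ℕ} (h : i ≤ n) :
    (playPrefix p n).take (i + 1) = playPrefix p i := by
  rw [playPrefix, ← List.map_take, List.take_range, min_eq_left (by omega), playPrefix]

theorem playPrefix_succ (p : ℕ → B) (n : ℕ) :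
    playPrefix p (n + 1) = playPrefix p n ++ [p (n + 1)] := by
  simp [playPrefix, List.range_succ]

theorem isChain_playPrefix {r : B → B → Prop} {p : ℕ → B} {n : ℕ}
    (h : ∀ i < n, r (p i) (p (i + 1))) : (playPrefix p n).IsChain r := by
  rw [List.isChain_iff_getElem]
  intro i hi
  simp only [playPrefix, List.length_map, List.length_range] at hi
  simpa [playPrefix] using h i (by omega)

theorem exists_seq_succ_eq_playPrefix (q : B) (F : List B → B) :
    ∃ p : ℕ → B, p 0 = q ∧ ∀ n, p (n + 1) = F (playPrefix p n) := by
  let hist : ℕ → List B := fun n => Nat.rec [q] (fun _ l => l ++ [F l]) n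
  let p n := (hist n).getLastD q
  have hhist : ∀ n, hist n = playPrefix p n := by
    intro n
    induction n with
    | zero => rfl
    | succ n ih =>
      rw [playPrefix_succ, ← ih]
      simp [p, hist]
  refine ⟨p, rfl, fun n => ?_⟩
  change (hist n ++ [F (hist n)]).getLastD q = _
  rw [List.getLastD_concat, hhist]

theorem InfPlay.comp_add {p : ℕ → B} (hp : G.InfPlay p) (k : ℕ) :
    G.InfPlay (fun n => p (n + k)) :=
  fun n => by simpa only [Nat.add_right_comm] using hp (n + k)

theorem PosGuidedInf.comp_add {p : ℕ → B} {f : B → B} (hf : G.PosGuidedInf pl f p) (k : ℕ) :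
    G.PosGuidedInf pl f (fun n => p (n + k)) :=
  fun n ho => by simpa only [Nat.add_right_comm] using hf (n + k) ho

theorem InfPlay.mem_of_closed {p : ℕ → B} {f : B → B} {S : Set B} (hp : G.InfPlay p)
    (hf : G.PosGuidedInf pl f p) (hne : ∀ v ∈ S, G.owner v ≠ pl → ∀ w, G.E v w → w ∈ S)
    (heq : ∀ v ∈ S, G.owner v = pl → (∃ w, G.E v w) → f v ∈ S) {k : ℕ} (hk : p k ∈ S) :
    ∀ n, k ≤ n → p n ∈ S := by
  refine Nat.le_induction hk fun n _ hn => ?_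
  by_cases ho : G.owner (p n) = pl
  · rw [hf n ho]; exact heq _ hn ho ⟨_, hp n⟩
  · exact hne _ hn ho _ (hp n)

theorem exists_posLegal (G : Game B) (pl : Bool) : ∃ f : B → B, G.PosLegal pl f := by
  classical
  exact ⟨fun v => if h : ∃ w, G.E v w then h.choose else v,
    fun v _ h => by simpa only [dif_pos h] using h.choose_spec⟩

theorem PosLegal.piecewise {S : Set B} [DecidablePred (· ∈ S)] {f f' : B → B}
    (hf : G.PosLegal pl f) (hf' : ∀ v ∈ S, G.owner v = pl → (∃ w, G.E v w) → G.E v (f' v)) :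
    G.PosLegal pl (S.piecewise f' f) := by
  intro v ho hmove
  by_cases hv : v ∈ S
  · rw [Set.piecewise_eq_of_mem S f' f hv]; exact hf' v hv ho hmove
  · rw [Set.piecewise_eq_of_notMem S f' f hv]; exact hf v ho hmove

theorem guidedFin_playPrefix {σ : List B → B} {p : ℕ → B} {n : ℕ}
    (h : ∀ i < n, G.owner (p i) = pl → p (i + 1) = σ (playPrefix p i)) :
    G.GuidedFin pl σ (playPrefix p n) := by
  intro i b c hb hc ho
  rw [getElem?_playPrefix] at hb hc
  split_ifs at hc with hi
  cases hc
  rw [if_pos (by omega), Option.some_inj] at hb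
  subst hb
  rw [take_playPrefix (by omega)]
  exact h i (by omega) ho

theorem WinsPos.winsGen {f : B → B} {q : B} (h : G.WinsPos Ω pl f q) :
    G.WinsGen Ω pl (fun l => f (l.getLastD q)) q := by
  obtain ⟨hlegal, hfin, hinf⟩ := h
  refine ⟨fun l b hl => ?_, fun l hq hl hg => hfin l hq hl fun i b c hb hc ho => ?_,
    fun p hp0 hp hg => hinf p hp0 hp fun n ho => ?_⟩
  · simpa [List.getLastD_eq_getLast?, hl] using hlegal b
  · simpa [List.getLastD_eq_getLast?, List.getLast?_take, hb] using hg i b c hb hc ho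
  · exact (hg n ho).trans (congrArg f (getLastD_playPrefix p n q))

theorem WinsGen.not_winsGen_not {σ τ : List B → B} {q : B} (hσ : G.WinsGen Ω pl σ q) :
    ¬ G.WinsGen Ω (!pl) τ q := by
  classical
  intro hτ
  let strat : Bool → List B → B := fun b => if b = pl then σ else τ
  have hwin : ∀ b, G.WinsGen Ω b (strat b) q := by
    intro b
    by_cases hb : b = pl
    · simpa [strat, hb] using hσ
    · simpa [strat, hb, Bool.eq_not_iff.mpr hb] using hτ
  obtain ⟨p, hp0, hp⟩ := exists_seq_succ_eq_playPrefix q fun l =>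
    if ∃ c, G.E (l.getLastD q) c then strat (G.owner (l.getLastD q)) l else l.getLastD q
  have hstep : ∀ n, (∃ c, G.E (p n) c) → G.E (p n) (p (n + 1)) ∧
      p (n + 1) = strat (G.owner (p n)) (playPrefix p n) := by
    intro n hmove
    rw [hp, getLastD_playPrefix, if_pos hmove]
    exact ⟨(hwin _).1 _ _ (getLast?_playPrefix p n) rfl hmove, rfl⟩
  by_cases hstuck : ∃ n, ∀ c, ¬ G.E (p n) c
  · set n := Nat.find hstuck
    have hmove : ∀ i < n, ∃ c, G.E (p i) c := fun i hi => by
      simpa using Nat.find_min hstuck hi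
    have hplay : G.FinPlay (playPrefix p n) := by
      refine ⟨by simp [playPrefix], isChain_playPrefix fun i hi => (hstep i (hmove i hi)).1, ?_⟩
      rw [getLast?_playPrefix]
      rintro b ⟨⟩
      exact Nat.find_spec hstuck
    have hguided : ∀ b, G.GuidedFin b (strat b) (playPrefix p n) :=
      fun b => guidedFin_playPrefix fun i hi ho => ho ▸ (hstep i (hmove i hi)).2
    exact (hwin _).2.1 _ (hp0 ▸ head?_playPrefix p n) hplay (hguided _) _
      (getLast?_playPrefix p n) rfl
  · push Not at hstuck
    have hplay : G.InfPlay p := fun n => (hstep n (hstuck n)).1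
    have hguided : ∀ b, G.GuidedInf b (strat b) p :=
      fun b n ho => ho ▸ (hstep n (hstuck n)).2
    exact ((hwin pl).2.2 p hp0 hplay (hguided pl)).not_parityWins_not
      ((hwin _).2.2 p hp0 hplay (hguided _))

structure IsParadise (G : Game B) (Ω : B → ℕ) (pl : Bool) (U : Set B) (g : B → B) : Prop where
  legal : G.PosLegal pl g
  move_mem_of_ne : ∀ v ∈ U, G.owner v ≠ pl → ∀ w, G.E v w → w ∈ U
  move_mem_of_eq : ∀ v ∈ U, G.owner v = pl → (∃ w, G.E v w) → g v ∈ U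
  owner_ne_of_stuck : ∀ v ∈ U, (∀ w, ¬ G.E v w) → G.owner v ≠ pl
  wins : ∀ p, p 0 ∈ U → G.InfPlay p → G.PosGuidedInf pl g p → ParityWins Ω pl p

theorem IsParadise.parityWins_of_tail (hU : G.IsParadise Ω pl U g) {p : ℕ → B}
    (hp : G.InfPlay p) {k : ℕ} (hk : p k ∈ U)
    (hg : ∀ n, k ≤ n → G.owner (p n) = pl → p (n + 1) = g (p n)) : ParityWins Ω pl p := by
  refine parityWins_of_shift k (hU.wins _ (by simpa using hk) (hp.comp_add k) fun n ho => ?_)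
  simpa only [Nat.add_right_comm] using hg (n + k) (by omega) ho

theorem IsParadise.parityWins_of_mem (hU : G.IsParadise Ω pl U g) {p : ℕ → B} {f : B → B}
    (hp : G.InfPlay p) (hf : G.PosGuidedInf pl f p)
    (hfg : ∀ v ∈ U, G.owner v = pl → f v = g v) {k : ℕ} (hk : p k ∈ U) : ParityWins Ω pl p := by
  have hmem := hp.mem_of_closed hf hU.move_mem_of_ne
    (fun v hv ho hmove => hfg v hv ho ▸ hU.move_mem_of_eq v hv ho hmove) hk
  exact hU.parityWins_of_tail hp hk fun n hn ho => (hf n ho).trans (hfg _ (hmem n hn) ho)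

theorem IsParadise.getElem?_mem (hU : G.IsParadise Ω pl U g) {l : List B}
    (hl : l.IsChain G.E) (hg : G.PosGuidedFin pl g l) {q : B} (hq : l.head? = some q)
    (hqU : q ∈ U) : ∀ (i : ℕ) (b : B), l[i]? = some b → b ∈ U := by
  intro i
  induction i with
  | zero =>
    intro b hb
    rw [← List.head?_eq_getElem?, hq, Option.some_inj] at hb
    exact hb ▸ hqU
  | succ i ih =>
    intro c hc
    obtain ⟨hi, rfl⟩ := List.getElem?_eq_some_iff.mp hc
    have hb : l[i]? = some l[i] := List.getElem?_eq_getElem (by omega)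
    have hE : G.E l[i] l[i + 1] := List.isChain_iff_getElem.mp hl i hi
    by_cases ho : G.owner l[i] = pl
    · rw [hg i _ _ hb hc ho]; exact hU.move_mem_of_eq _ (ih _ hb) ho ⟨_, hE⟩
    · exact hU.move_mem_of_ne _ (ih _ hb) ho _ hE

theorem IsParadise.winsPos (hU : G.IsParadise Ω pl U g) {q : B} (hq : q ∈ U) :
    G.WinsPos Ω pl g q := by
  refine ⟨hU.legal, fun l hl0 hl hg b hb => ?_, fun p hp0 hp hg => hU.wins p (hp0 ▸ hq) hp hg⟩
  have hbU := hU.getElem?_mem hl.2.1 hg hl0 hq _ b (List.getLast?_eq_getElem? ▸ hb)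
  exact hU.owner_ne_of_stuck b hbU (hl.2.2 b hb)

theorem IsParadise.insert (hU : G.IsParadise Ω pl U g) {v : B}
    (hown : G.owner v = pl → ∃ w ∈ U, G.E v w)
    (hopp : G.owner v ≠ pl → ∀ w, G.E v w → w ∈ U) :
    ∃ g', G.IsParadise Ω pl (insert v U) g' := by
  classical
  by_cases hvU : v ∈ U
  · exact ⟨g, by rwa [Set.insert_eq_of_mem hvU]⟩
  obtain ⟨w₀, hw₀⟩ : ∃ w₀, G.owner v = pl → w₀ ∈ U ∧ G.E v w₀ := by
    by_cases ho : G.owner v = pl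
    · obtain ⟨w, hw⟩ := hown ho; exact ⟨w, fun _ => hw⟩
    · exact ⟨v, fun h => absurd h ho⟩
  have hagree : ∀ u ∈ U, Function.update g v w₀ u = g u :=
    fun u hu => Function.update_of_ne (ne_of_mem_of_not_mem hu hvU) _ _
  refine ⟨Function.update g v w₀, ⟨fun u ho hmove => ?_, ?_, ?_, ?_, fun p hp0 hp hf => ?_⟩⟩
  · rcases eq_or_ne u v with rfl | hu
    · simpa using (hw₀ ho).2
    · simpa [hu] using hU.legal u ho hmove
  · rintro u (rfl | hu) ho w hE
    exacts [Or.inr (hopp ho w hE), Or.inr (hU.move_mem_of_ne u hu ho w hE)]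
  · rintro u (rfl | hu) ho hmove
    exacts [by simpa using Or.inr (hw₀ ho).1,
      hagree u hu ▸ Or.inr (hU.move_mem_of_eq u hu ho hmove)]
  · rintro u (rfl | hu) hstuck ho
    exacts [hstuck _ (hw₀ ho).2, hU.owner_ne_of_stuck u hu hstuck ho]
  · obtain ⟨k, hk⟩ : ∃ k, p k ∈ U := by
      rcases hp0 with hp0 | hp0
      · refine ⟨1, ?_⟩
        by_cases ho : G.owner (p 0) = pl
        · rw [hf 0 ho, hp0, Function.update_self]; exact (hw₀ (hp0 ▸ ho)).1
        · exact hopp (hp0 ▸ ho) _ (hp0 ▸ hp 0)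
      · exact ⟨0, hp0⟩
    exact hU.parityWins_of_mem hp hf (fun u hu _ => hagree u hu) hk

theorem IsParadise.iUnion {ι : Type*} {U : ι → Set B} {g : ι → B → B}
    (hU : ∀ i, G.IsParadise Ω pl (U i) (g i)) : ∃ g', G.IsParadise Ω pl (⋃ i, U i) g' := by
  rcases isEmpty_or_nonempty ι with hι | hι
  · obtain ⟨f₀, hf₀⟩ := G.exists_posLegal pl
    exact ⟨f₀, hf₀, by simp, by simp, by simp, fun p hp0 => by simp at hp0⟩
  -- `ι` is well-ordered through its embedding into the cardinals
  have hmin : ∀ v ∈ ⋃ i, U i, ∃ i, v ∈ U i ∧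
      ∀ j, v ∈ U j → embeddingToCardinal i ≤ embeddingToCardinal j := by
    intro v hv
    obtain ⟨i, hi, hmin⟩ := exists_minimalFor_of_wellFoundedLT (fun i => v ∈ U i)
      embeddingToCardinal (Set.mem_iUnion.mp hv)
    exact ⟨i, hi, fun j hj => (le_total _ _).elim id (hmin hj)⟩
  choose! idx hidx hle using hmin
  refine ⟨fun v => g (idx v) v, ⟨fun v ho hmove => (hU _).legal v ho hmove,
    fun v hv ho w hE => Set.subset_iUnion U _ ((hU _).move_mem_of_ne v (hidx v hv) ho w hE),
    fun v hv ho hmove => Set.subset_iUnion U _ ((hU _).move_mem_of_eq v (hidx v hv) ho hmove),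
    fun v hv => (hU _).owner_ne_of_stuck v (hidx v hv), fun p hp0 hp hf => ?_⟩⟩
  have hnext : ∀ n, p n ∈ ⋃ i, U i → p (n + 1) ∈ U (idx (p n)) := by
    intro n hn
    by_cases ho : G.owner (p n) = pl
    · rw [hf n ho]; exact (hU _).move_mem_of_eq _ (hidx _ hn) ho ⟨_, hp n⟩
    · exact (hU _).move_mem_of_ne _ (hidx _ hn) ho _ (hp n)
  have hmem : ∀ n, p n ∈ ⋃ i, U i := fun n => by
    induction n with
    | zero => exact hp0
    | succ n ih => exact Set.subset_iUnion U _ (hnext n ih)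
  obtain ⟨N, hN⟩ := WellFoundedLT.antitone_chain_condition
    (f := fun n => embeddingToCardinal (idx (p n)))
    (antitone_nat_of_succ_le fun n => hle _ (hmem (n + 1)) _ (hnext n (hmem n)))
  have hidxN : ∀ n, N ≤ n → idx (p n) = idx (p N) :=
    fun n hn => embeddingToCardinal.injective (hN n hn).symm
  refine (hU (idx (p N))).parityWins_of_tail hp (hidx _ (hmem N)) fun n hn ho => ?_
  rw [hf n ho, ← hidxN n hn]

def paradiseRegion (G : Game B) (Ω : B → ℕ) (pl : Bool) : Set B :=
  {v | ∃ U g, G.IsParadise Ω pl U g ∧ v ∈ U}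

theorem IsParadise.subset_paradiseRegion (hU : G.IsParadise Ω pl U g) :
    U ⊆ G.paradiseRegion Ω pl :=
  fun _ hv => ⟨U, g, hU, hv⟩

theorem exists_isParadise_paradiseRegion (G : Game B) (Ω : B → ℕ) (pl : Bool) :
    ∃ g, G.IsParadise Ω pl (G.paradiseRegion Ω pl) g := by
  have hunion : G.paradiseRegion Ω pl =
      ⋃ x : {x : Set B × (B → B) // G.IsParadise Ω pl x.1 x.2}, x.1.1 := by
    ext v
    simp [paradiseRegion, and_comm]
  rw [hunion]
  exact IsParadise.iUnion fun x => x.2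

theorem mem_paradiseRegion_of_eq {v w : B} (ho : G.owner v = pl) (hE : G.E v w)
    (hw : w ∈ G.paradiseRegion Ω pl) : v ∈ G.paradiseRegion Ω pl := by
  obtain ⟨g, hg⟩ := G.exists_isParadise_paradiseRegion Ω pl
  obtain ⟨g', hg'⟩ := hg.insert (fun _ => ⟨w, hw, hE⟩) fun h => absurd ho h
  exact hg'.subset_paradiseRegion (Set.mem_insert v _)

theorem mem_paradiseRegion_of_ne {v : B} (ho : G.owner v ≠ pl)
    (hw : ∀ w, G.E v w → w ∈ G.paradiseRegion Ω pl) : v ∈ G.paradiseRegion Ω pl := by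
  obtain ⟨g, hg⟩ := G.exists_isParadise_paradiseRegion Ω pl
  obtain ⟨g', hg'⟩ := hg.insert (fun h => absurd h ho) fun _ => hw
  exact hg'.subset_paradiseRegion (Set.mem_insert v _)

theorem mem_paradiseRegion_of_winsGen (hcover : ∀ q, ∃ pl, q ∈ G.paradiseRegion Ω pl)
    {σ : List B → B} {q : B} (hσ : G.WinsGen Ω pl σ q) : q ∈ G.paradiseRegion Ω pl := by
  obtain ⟨pl', hq⟩ := hcover q
  by_cases h : pl' = pl
  · exact h ▸ hq
  rw [Bool.eq_not_iff.mpr h] at hq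
  obtain ⟨g, hg⟩ := G.exists_isParadise_paradiseRegion Ω (!pl)
  exact absurd (hg.winsPos hq).winsGen hσ.not_winsGen_not

/-- The subgame on `R`; the positions outside `R` are kept, as dead ends. -/
def restrict (G : Game B) (R : Set B) : Game B :=
  ⟨G.owner, fun v w => G.E v w ∧ v ∈ R ∧ w ∈ R⟩

theorem IsParadise.union_restrict (hU : G.IsParadise Ω pl U g) {R U' : Set B} {g' : B → B}
    (hU' : (G.restrict R).IsParadise Ω pl U' g')
    (hne : ∀ v ∈ R, G.owner v ≠ pl → ∀ w, G.E v w → w ∈ R ∨ w ∈ U)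
    (heq : ∀ v ∈ R, G.owner v = pl → (∃ w, G.E v w) → ∃ w ∈ R, G.E v w) :
    ∃ g'', G.IsParadise Ω pl (U ∪ (U' ∩ R)) g'' := by
  classical
  obtain ⟨f₀, hf₀⟩ := G.exists_posLegal pl
  have hmoveR : ∀ v ∈ R, G.owner v = pl → (∃ w, G.E v w) → (G.restrict R).E v (g' v) := by
    intro v hv ho hmove
    obtain ⟨w, hwR, hE⟩ := heq v hv ho hmove
    exact hU'.legal v ho ⟨w, hE, hv, hwR⟩
  set g'' := U.piecewise g (R.piecewise g' f₀)
  have hg''U : ∀ v ∈ U, g'' v = g v := fun v hv => Set.piecewise_eq_of_mem _ _ _ hv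
  have hg''R : ∀ v ∈ R, v ∉ U → g'' v = g' v := fun v hvR hvU =>
    (Set.piecewise_eq_of_notMem _ _ _ hvU).trans (Set.piecewise_eq_of_mem _ _ _ hvR)
  have hne' : ∀ v ∈ U ∪ (U' ∩ R), G.owner v ≠ pl → ∀ w, G.E v w → w ∈ U ∪ (U' ∩ R) := by
    rintro v (hv | ⟨hv, hvR⟩) ho w hE
    · exact Or.inl (hU.move_mem_of_ne v hv ho w hE)
    · rcases hne v hvR ho w hE with hwR | hwU
      · exact Or.inr ⟨hU'.move_mem_of_ne v hv ho w ⟨hE, hvR, hwR⟩, hwR⟩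
      · exact Or.inl hwU
  have heq' : ∀ v ∈ U ∪ (U' ∩ R), G.owner v = pl → (∃ w, G.E v w) →
      g'' v ∈ U ∪ (U' ∩ R) := by
    intro v hv ho hmove
    by_cases hvU : v ∈ U
    · rw [hg''U v hvU]; exact Or.inl (hU.move_mem_of_eq v hvU ho hmove)
    obtain ⟨hv, hvR⟩ := hv.resolve_left hvU
    have hE := hmoveR v hvR ho hmove
    rw [hg''R v hvR hvU]
    exact Or.inr ⟨hU'.move_mem_of_eq v hv ho ⟨_, hE⟩, hE.2.2⟩
  refine ⟨g'', (hf₀.piecewise fun v hv ho hmove => (hmoveR v hv ho hmove).1).piecewise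
    fun v _ ho hmove => hU.legal v ho hmove, hne', heq', ?_, fun p hp0 hp hf => ?_⟩
  · rintro v (hv | ⟨hv, -⟩) hstuck
    · exact hU.owner_ne_of_stuck v hv hstuck
    · exact hU'.owner_ne_of_stuck v hv fun w hE => hstuck w hE.1
  by_cases hreach : ∃ k, p k ∈ U
  · obtain ⟨k, hk⟩ := hreach
    exact hU.parityWins_of_mem hp hf (fun v hv _ => hg''U v hv) hk
  push Not at hreach
  have hmem : ∀ n, p n ∈ U' ∩ R := fun n =>
    (hp.mem_of_closed hf hne' heq' hp0 n n.zero_le).resolve_left (hreach n)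
  refine hU'.wins p (hmem 0).1 (fun n => ⟨hp n, (hmem n).2, (hmem (n + 1)).2⟩) fun n ho => ?_
  rw [hf n ho, hg''R _ (hmem n).2 (hreach n)]

theorem paradiseRegion_restrict_inter_subset {R : Set B}
    (hne : ∀ v ∈ R, G.owner v ≠ pl → ∀ w, G.E v w → w ∈ R ∨ w ∈ G.paradiseRegion Ω pl)
    (heq : ∀ v ∈ R, G.owner v = pl → (∃ w, G.E v w) → ∃ w ∈ R, G.E v w) :
    (G.restrict R).paradiseRegion Ω pl ∩ R ⊆ G.paradiseRegion Ω pl := by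
  obtain ⟨g, hg⟩ := G.exists_isParadise_paradiseRegion Ω pl
  obtain ⟨g', hg'⟩ := (G.restrict R).exists_isParadise_paradiseRegion Ω pl
  obtain ⟨g'', hg''⟩ := hg.union_restrict hg' hne heq
  exact fun v hv => hg''.subset_paradiseRegion (Or.inr hv)

section Attractor

open OrdinalApprox

variable (G) in
def attractorStep (pl : Bool) (Z N : Set B) : Set B →o Set B where
  toFun X := N ∪ {v ∈ Z | G.owner v = pl ∧ (∃ w ∈ X, G.E v w) ∨
    G.owner v ≠ pl ∧ ∀ w, G.E v w → w ∈ X}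
  monotone' X Y hXY := by
    rintro v (hv | ⟨hvZ, ⟨ho, w, hw, hE⟩ | ⟨ho, hw⟩⟩)
    exacts [Or.inl hv, Or.inr ⟨hvZ, Or.inl ⟨ho, w, hXY hw, hE⟩⟩,
      Or.inr ⟨hvZ, Or.inr ⟨ho, fun w hE => hXY (hw w hE)⟩⟩]

variable (G) in
/-- The `pl`-attractor of `N` inside `Z`: the positions of `Z` from which `pl` can force a visit
to `N` without leaving `Z`. -/
def attractor (pl : Bool) (Z N : Set B) : Set B := (G.attractorStep pl Z N).lfp

variable (G) in
noncomputable def attractorRank (pl : Bool) (Z N : Set B) (v : B) : Ordinal :=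
  sInf {a | v ∈ lfpApprox (G.attractorStep pl Z N) ⊥ a}

variable {Z N : Set B}

theorem attractorStep_attractor :
    G.attractorStep pl Z N (G.attractor pl Z N) = G.attractor pl Z N :=
  OrderHom.map_lfp _

theorem subset_attractor : N ⊆ G.attractor pl Z N :=
  fun _ hv => attractorStep_attractor ▸ Or.inl hv

theorem attractor_subset (hN : N ⊆ Z) : G.attractor pl Z N ⊆ Z :=
  OrderHom.lfp_le _ (Set.union_subset hN fun _ hv => hv.1)

theorem mem_attractor_of_eq {v w : B} (hv : v ∈ Z) (ho : G.owner v = pl) (hE : G.E v w)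
    (hw : w ∈ G.attractor pl Z N) : v ∈ G.attractor pl Z N :=
  attractorStep_attractor ▸ Or.inr ⟨hv, Or.inl ⟨ho, w, hw, hE⟩⟩

theorem mem_attractor_of_ne {v : B} (hv : v ∈ Z) (ho : G.owner v ≠ pl)
    (hw : ∀ w, G.E v w → w ∈ G.attractor pl Z N) : v ∈ G.attractor pl Z N :=
  attractorStep_attractor ▸ Or.inr ⟨hv, Or.inr ⟨ho, hw⟩⟩

theorem exists_subset_attractor_of_mem {v : B} (hv : v ∈ G.attractor pl Z N) (hvN : v ∉ N) :
    ∃ X ⊆ G.attractor pl Z N, (∀ w ∈ X, G.attractorRank pl Z N w < G.attractorRank pl Z N v) ∧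
      (G.owner v = pl ∧ (∃ w ∈ X, G.E v w) ∨ G.owner v ≠ pl ∧ ∀ w, G.E v w → w ∈ X) := by
  have hne : {a | v ∈ lfpApprox (G.attractorStep pl Z N) ⊥ a}.Nonempty := by
    obtain ⟨a, ha⟩ := lfp_mem_range_lfpApprox (G.attractorStep pl Z N)
    exact ⟨a, by rwa [Set.mem_ofPred_eq, ha]⟩
  have hmem := csInf_mem hne
  rw [Set.mem_ofPred_eq, lfpApprox] at hmem
  simp only [Set.bot_eq_empty, Set.iSup_eq_iUnion, Set.empty_subset, sup_of_le_right,
    Set.mem_iUnion, exists_prop] at hmem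
  obtain ⟨a, ha, hva⟩ := hmem
  refine ⟨_, lfpApprox_le_of_mem_fixedPoints _ attractorStep_attractor bot_le a,
    fun w hw => (csInf_le' (s := {a | w ∈ lfpApprox (G.attractorStep pl Z N) ⊥ a}) hw).trans_lt
      ha, (hva.resolve_left hvN).2⟩

theorem exists_move_attractorRank_lt {v : B} (hv : v ∈ G.attractor pl Z N) (hvN : v ∉ N)
    (ho : G.owner v = pl) : ∃ w, G.E v w ∧ w ∈ G.attractor pl Z N ∧
      G.attractorRank pl Z N w < G.attractorRank pl Z N v := by
  obtain ⟨X, hXA, hXrank, h⟩ := exists_subset_attractor_of_mem hv hvN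
  obtain ⟨w, hw, hE⟩ := (h.resolve_right fun h' => h'.1 ho).2
  exact ⟨w, hE, hXA hw, hXrank w hw⟩

theorem attractorRank_lt_of_move {v w : B} (hv : v ∈ G.attractor pl Z N) (hvN : v ∉ N)
    (ho : G.owner v ≠ pl) (hE : G.E v w) : w ∈ G.attractor pl Z N ∧
      G.attractorRank pl Z N w < G.attractorRank pl Z N v := by
  obtain ⟨X, hXA, hXrank, h⟩ := exists_subset_attractor_of_mem hv hvN
  have hw := (h.resolve_left fun h' => ho h'.1).2 w hE
  exact ⟨hXA hw, hXrank w hw⟩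

theorem exists_attractor_strategy (hNZ : N ⊆ Z)
    (heq : ∀ v ∈ Z, G.owner v = pl → ∃ w ∈ Z, G.E v w) :
    ∃ f, G.PosLegal pl f ∧ (∀ v ∈ Z, G.owner v = pl → f v ∈ Z) ∧
      ∀ v ∈ G.attractor pl Z N, v ∉ N → G.owner v = pl →
        f v ∈ G.attractor pl Z N ∧ G.attractorRank pl Z N (f v) < G.attractorRank pl Z N v := by
  obtain ⟨f₀, hf₀⟩ := G.exists_posLegal pl
  have hchoice : ∀ v, ∃ w, G.owner v = pl → ((∃ c, G.E v c) → G.E v w) ∧ (v ∈ Z → w ∈ Z) ∧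
      (v ∈ G.attractor pl Z N → v ∉ N →
        w ∈ G.attractor pl Z N ∧ G.attractorRank pl Z N w < G.attractorRank pl Z N v) := by
    intro v
    by_cases ho : G.owner v = pl
    swap
    · exact ⟨v, fun h => absurd h ho⟩
    by_cases hvA : v ∈ G.attractor pl Z N ∧ v ∉ N
    · obtain ⟨w, hE, hwA, hlt⟩ := exists_move_attractorRank_lt hvA.1 hvA.2 ho
      exact ⟨w, fun _ => ⟨fun _ => hE, fun _ => attractor_subset hNZ hwA, fun _ _ => ⟨hwA, hlt⟩⟩⟩
    by_cases hvZ : v ∈ Z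
    · obtain ⟨w, hwZ, hE⟩ := heq v hvZ ho
      exact ⟨w, fun _ => ⟨fun _ => hE, fun _ => hwZ, fun h h' => absurd ⟨h, h'⟩ hvA⟩⟩
    · exact ⟨f₀ v, fun _ => ⟨hf₀ v ho, fun h => absurd h hvZ,
        fun h => absurd (attractor_subset hNZ h) hvZ⟩⟩
  choose f hf using hchoice
  exact ⟨f, fun v ho => (hf v ho).1, fun v hv ho => (hf v ho).2.1 hv,
    fun v hvA hvN ho => (hf v ho).2.2 hvA hvN⟩

theorem InfPlay.exists_mem_of_attractor {p : ℕ → B} {f : B → B} (hp : G.InfPlay p)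
    (hf : G.PosGuidedInf pl f p)
    (hfA : ∀ v ∈ G.attractor pl Z N, v ∉ N → G.owner v = pl →
      f v ∈ G.attractor pl Z N ∧ G.attractorRank pl Z N (f v) < G.attractorRank pl Z N v)
    {k : ℕ} (hk : p k ∈ G.attractor pl Z N) : ∃ n ≥ k, p n ∈ N := by
  by_contra! hN
  have hstep : ∀ n ≥ k, p n ∈ G.attractor pl Z N → p (n + 1) ∈ G.attractor pl Z N ∧
      G.attractorRank pl Z N (p (n + 1)) < G.attractorRank pl Z N (p n) := by
    intro n hn hA
    by_cases ho : G.owner (p n) = pl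
    · rw [hf n ho]; exact hfA _ hA (hN n hn) ho
    · exact attractorRank_lt_of_move hA (hN n hn) ho (hp n)
  have hA : ∀ n ≥ k, p n ∈ G.attractor pl Z N :=
    fun n hn => Nat.le_induction hk (fun n hn hA => (hstep n hn hA).1) n hn
  exact not_strictAnti_of_wellFoundedLT (fun m => G.attractorRank pl Z N (p (k + m)))
    (strictAnti_nat_of_succ_lt fun m => (hstep (k + m) (by omega) (hA _ (by omega))).2)

end Attractor

theorem exists_isParadise_of_trap {Z N : Set B} {d : ℕ} (hd : d % 2 = cond pl 1 0)
    (hΩ : ∀ v w, G.E v w → Ω v ≤ d) (hNZ : N ⊆ Z) (hN : ∀ v ∈ N, Ω v = d)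
    (hne : ∀ v ∈ Z, G.owner v ≠ pl → ∀ w, G.E v w → w ∈ Z)
    (heq : ∀ v ∈ Z, G.owner v = pl → ∃ w ∈ Z, G.E v w)
    (hsub : Z \ G.attractor pl Z N ⊆
      (G.restrict (Z \ G.attractor pl Z N)).paradiseRegion Ω pl) :
    ∃ f, G.IsParadise Ω pl Z f := by
  classical
  set A := G.attractor pl Z N
  set R := Z \ A
  obtain ⟨f', hf'⟩ := (G.restrict R).exists_isParadise_paradiseRegion Ω pl
  obtain ⟨fA, hfA, hfAZ, hfA_lt⟩ := exists_attractor_strategy hNZ heq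
  have hmoveR : ∀ v ∈ R, G.owner v = pl → (G.restrict R).E v (f' v) := by
    intro v hv ho
    obtain ⟨w, hwZ, hE⟩ := heq v hv.1 ho
    have hwA : w ∉ A := fun hwA => hv.2 (mem_attractor_of_eq hv.1 ho hE hwA)
    exact hf'.legal v ho ⟨w, hE, hv, hwZ, hwA⟩
  set f := R.piecewise f' fA
  have hfR : ∀ v ∈ R, f v = f' v := fun v hv => Set.piecewise_eq_of_mem _ _ _ hv
  have hfA' : ∀ v ∉ R, f v = fA v := fun v hv => Set.piecewise_eq_of_notMem _ _ _ hv
  have heq' : ∀ v ∈ Z, G.owner v = pl → (∃ w, G.E v w) → f v ∈ Z := by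
    intro v hv ho _
    by_cases hvR : v ∈ R
    · rw [hfR v hvR]; exact (hmoveR v hvR ho).2.2.1
    · rw [hfA' v hvR]; exact hfAZ v hv ho
  refine ⟨f, hfA.piecewise fun v hv ho _ => (hmoveR v hv ho).1, hne, heq',
    fun v hv hstuck ho => ?_, fun p hp0 hp hg => ?_⟩
  · obtain ⟨w, -, hE⟩ := heq v hv ho
    exact hstuck w hE
  have hZ : ∀ n, p n ∈ Z := fun n => hp.mem_of_closed hg hne heq' hp0 n n.zero_le
  by_cases hinf : ∀ T, ∃ n ≥ T, p n ∈ N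
  · exact parityWins_of_frequently_eq hd (fun n => hΩ _ _ (hp n))
      fun T => (hinf T).imp fun n hn => ⟨hn.1, hN _ hn.2⟩
  push Not at hinf
  obtain ⟨T, hT⟩ := hinf
  -- entering `A` after time `T` would force a later visit to `N`
  have hR : ∀ n, p (n + T) ∈ R := fun n => ⟨hZ _, fun hA => by
    obtain ⟨m, hm, hmN⟩ := hp.exists_mem_of_attractor hg (fun v hvA hvN ho =>
      hfA' v (fun hvR => hvR.2 hvA) ▸ hfA_lt v hvA hvN ho) hA
    exact hT m (by omega) hmN⟩
  refine parityWins_of_shift T (hf'.wins _ (hsub (hR 0))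
    (fun n => ⟨hp.comp_add T n, hR n, hR (n + 1)⟩) fun n ho => ?_)
  exact (hg.comp_add T n ho).trans (hfR _ (hR n))

theorem notMem_paradiseRegion_restrict_diff_attractor {Z N : Set B}
    (hZ : (G.paradiseRegion Ω (!pl))ᶜ = Z) {v : B} (hv : v ∈ Z \ G.attractor pl Z N) :
    v ∉ (G.restrict (Z \ G.attractor pl Z N)).paradiseRegion Ω (!pl) := by
  subst hZ
  refine fun hv' => hv.1 (paradiseRegion_restrict_inter_subset (fun u hu ho w hE => ?_)
    (fun u hu ho _ => ?_) ⟨hv', hv⟩)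
  · by_cases hw : w ∈ G.paradiseRegion Ω (!pl)
    · exact Or.inr hw
    · have ho : G.owner u = pl := by simpa using ho
      exact Or.inl ⟨hw, fun hwA => hu.2 (mem_attractor_of_eq hu.1 ho hE hwA)⟩
  · by_contra! h
    exact hu.2 (mem_attractor_of_ne hu.1 (Bool.eq_not_iff.mp ho) fun w hE => not_not.mp fun hwA =>
      h w ⟨fun hw => hu.1 (mem_paradiseRegion_of_eq ho hE hw), hwA⟩ hE)

-- Only positions with a move need a priority below `d`: dead ends occur in no infinite play, and
-- the positions removed from a subgame become dead ends.
theorem exists_mem_paradiseRegion_of_lt (d : ℕ) :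
    ∀ (G : Game B) (Ω : B → ℕ), (∀ v w, G.E v w → Ω v < d) →
      ∀ v, ∃ pl, v ∈ G.paradiseRegion Ω pl := by
  induction d with
  | zero =>
    intro G Ω hΩ v
    have hstuck : ∀ v w, ¬ G.E v w := fun v w hE => Nat.not_lt_zero _ (hΩ v w hE)
    refine ⟨!G.owner v, IsParadise.subset_paradiseRegion (U := {v}) (g := id)
      ⟨fun _ _ ⟨w, hE⟩ => absurd hE (hstuck _ w), fun _ _ _ w hE => absurd hE (hstuck _ w),
        fun _ _ _ ⟨w, hE⟩ => absurd hE (hstuck _ w), ?_, fun p _ hp => absurd (hp 0) (hstuck _ _)⟩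
      rfl⟩
    rintro _ rfl -
    exact (Bool.not_ne_self _).symm
  | succ d ih =>
    intro G Ω hΩ
    set pl : Bool := decide (d % 2 = 1)
    have hd : d % 2 = cond pl 1 0 := by
      rcases Nat.mod_two_eq_zero_or_one d with h | h <;> simp [pl, h]
    set Z := (G.paradiseRegion Ω (!pl))ᶜ
    set A := G.attractor pl Z {v ∈ Z | Ω v = d}
    have hZne : ∀ v ∈ Z, G.owner v ≠ pl → ∀ w, G.E v w → w ∈ Z :=
      fun v hv ho w hE hw => hv (mem_paradiseRegion_of_eq (Bool.eq_not_iff.mpr ho) hE hw)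
    have hZeq : ∀ v ∈ Z, G.owner v = pl → ∃ w ∈ Z, G.E v w := by
      intro v hv ho
      by_contra! h
      exact hv (mem_paradiseRegion_of_ne (by simp [ho]) fun w hE => not_not.mp (h w · hE))
    have hR : Z \ A ⊆ (G.restrict (Z \ A)).paradiseRegion Ω pl := by
      intro v hv
      have hΩ' : ∀ v w, (G.restrict (Z \ A)).E v w → Ω v < d := fun v w hE =>
        lt_of_le_of_ne (Nat.lt_succ_iff.mp (hΩ v w hE.1))
          fun h => hE.2.1.2 (subset_attractor ⟨hE.2.1.1, h⟩)
      obtain ⟨pl', hv'⟩ := ih _ Ω hΩ' v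
      by_cases h : pl' = pl
      · exact h ▸ hv'
      rw [Bool.eq_not_iff.mpr h] at hv'
      exact absurd hv' (notMem_paradiseRegion_restrict_diff_attractor rfl hv)
    obtain ⟨f, hf⟩ := exists_isParadise_of_trap hd (fun v w hE => Nat.lt_succ_iff.mp (hΩ v w hE))
      (fun _ h => h.1) (fun _ h => h.2) hZne hZeq hR
    intro v
    by_cases hv : v ∈ G.paradiseRegion Ω (!pl)
    · exact ⟨_, hv⟩
    · exact ⟨pl, hf.subset_paradiseRegion hv⟩

end Game

/-- Positional determinacy of parity games: from every position exactly one
player has a winning strategy, and each player `pl` has a single positional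
strategy winning from every position of `pl`'s winning region. -/
theorem parity_positional_determinacy {B : Type*} (G : Game B) (Ω : B → ℕ)
    (hfin : (Set.range Ω).Finite) :
    (∀ q : B, Xor' (∃ σ, G.WinsGen Ω false σ q) (∃ σ, G.WinsGen Ω true σ q)) ∧
    (∀ pl : Bool, ∃ f : B → B,
      ∀ q : B, (∃ σ, G.WinsGen Ω pl σ q) → G.WinsPos Ω pl f q) := by
  obtain ⟨d, hd⟩ := hfin.bddAbove
  have hcover : ∀ q, ∃ pl, q ∈ G.paradiseRegion Ω pl :=
    Game.exists_mem_paradiseRegion_of_lt (d + 1) G Ω fun v _ _ => Nat.lt_succ_of_le (hd ⟨v, rfl⟩)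
  have hwin : ∀ pl q, (∃ σ, G.WinsGen Ω pl σ q) ↔ q ∈ G.paradiseRegion Ω pl := by
    refine fun pl q => ⟨fun ⟨_, hσ⟩ => Game.mem_paradiseRegion_of_winsGen hcover hσ, fun hq => ?_⟩
    obtain ⟨g, hg⟩ := G.exists_isParadise_paradiseRegion Ω pl
    exact ⟨_, (hg.winsPos hq).winsGen⟩
  refine ⟨fun q => xor_iff_iff_not.mpr ⟨fun ⟨_, hσ⟩ ⟨_, hτ⟩ => hσ.not_winsGen_not hτ, fun h => ?_⟩,
    fun pl => ?_⟩
  · obtain ⟨pl, hq⟩ := hcover q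
    cases pl
    · exact (hwin false q).2 hq
    · exact absurd ((hwin true q).2 hq) h
  · obtain ⟨f, hf⟩ := G.exists_isParadise_paradiseRegion Ω pl
    exact ⟨f, fun q hq => hf.winsPos ((hwin pl q).1 hq)⟩
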